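/- arXiv:1502.07512 — 6 statements merged into one kernel-verified Lean document; each statement's English description precedes it below -/
import Mathlib

section
/- Let f: ℝ → ℝ be an increasing Lipschitz continuous function. Then for any measurable set B ⊆ ℝ with Lebesgue measure zero, the derivative f' equals zero almost everywhere on the preimage f⁻¹(B). -/
open MeasureTheory Set Filter Topology

/-!
On the set `s` of points of `f ⁻¹' B` where `f' ≠ 0` (hence `f' > 0`), a monotone `f` is
injective, since a monotone function that takes the same value at two points is constant between
them and so has zero derivative at the left one. The change of variables inequality
`∫ₛ |f'| ≤ |f(s)|` for injective maps then gives `∫ₛ |f'| = 0` because `f(s) ⊆ B` is null,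
so `s` is null.
-/

theorem ae_det_fderiv_eq_zero_of_addHaar_image_eq_zero {E : Type*} [NormedAddCommGroup E]
    [NormedSpace ℝ E] [FiniteDimensional ℝ E] [MeasurableSpace E] [BorelSpace E]
    (μ : Measure E) [μ.IsAddHaarMeasure] {f : E → E} {f' : E → E →L[ℝ] E} {s : Set E}
    (hs : MeasurableSet s) (hf' : ∀ x ∈ s, HasFDerivWithinAt f (f' x) s x) (hf : InjOn f s)
    (himage : μ (f '' s) = 0) : ∀ᵐ x ∂μ.restrict s, (f' x).det = 0 := by
  have hint : ∫⁻ x in s, ENNReal.ofReal |(f' x).det| ∂μ = 0 := by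
    rw [lintegral_abs_det_fderiv_eq_addHaar_image μ hs hf' hf, himage]
  filter_upwards [(lintegral_eq_zero_iff' (aemeasurable_ofReal_abs_det_fderivWithin μ hs hf')).1
    hint] with x hx
  simpa using hx

theorem ae_eq_zero_of_hasDerivWithinAt_of_volume_image_eq_zero {f f' : ℝ → ℝ} {s : Set ℝ}
    (hs : MeasurableSet s) (hf' : ∀ x ∈ s, HasDerivWithinAt f (f' x) s x) (hf : InjOn f s)
    (himage : volume (f '' s) = 0) : ∀ᵐ x ∂volume.restrict s, f' x = 0 := by
  have hdet := ae_det_fderiv_eq_zero_of_addHaar_image_eq_zero volume hs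
    (fun x hx => (hf' x hx).hasFDerivWithinAt) hf himage
  simpa only [ContinuousLinearMap.smulRight_one_eq_toSpanSingleton,
    ContinuousLinearMap.det_toSpanSingleton] using hdet

namespace Monotone

variable {f : ℝ → ℝ}

theorem deriv_eq_zero_of_eq (hf : Monotone f) {x y : ℝ} (hxy : x < y) (hfxy : f x = f y) :
    deriv f x = 0 := by
  by_cases hd : DifferentiableAt ℝ f x
  swap
  · exact deriv_zero_of_not_differentiableAt hd
  have hconst : f =ᶠ[𝓝[>] x] fun _ => f x := by
    filter_upwards [Ioo_mem_nhdsGT hxy] with z hz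
    exact le_antisymm (hfxy ▸ hf hz.2.le) (hf hz.1.le)
  exact (uniqueDiffWithinAt_Ioi x).eq_deriv _ hd.hasDerivAt.hasDerivWithinAt
    ((hasDerivWithinAt_const x _ (f x)).congr_of_eventuallyEq hconst rfl)

theorem injOn_deriv_ne_zero (hf : Monotone f) : InjOn f {x | deriv f x ≠ 0} := by
  intro x hx y hy hxy
  by_contra hne
  rcases lt_or_gt_of_ne hne with h | h
  · exact hx (hf.deriv_eq_zero_of_eq h hxy)
  · exact hy (hf.deriv_eq_zero_of_eq h hxy.symm)

end Monotone

theorem deriv_zero_ae_on_preimage_null_general (f : ℝ → ℝ)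
    (hmono : Monotone f)
    (B : Set ℝ) (hB0 : volume B = 0) :
    ∀ᵐ ξ, ξ ∈ f ⁻¹' B → deriv f ξ = 0 := by
  set T := toMeasurable volume B
  set s := f ⁻¹' T ∩ {x | deriv f x ≠ 0}
  have hs : MeasurableSet s := ((measurableSet_toMeasurable _ _).preimage hmono.measurable).inter
    (measurable_deriv f (measurableSet_singleton 0).compl)
  have hf' : ∀ x ∈ s, HasDerivWithinAt f (deriv f x) s x := fun x hx =>
    (differentiableAt_of_deriv_ne_zero hx.2).hasDerivAt.hasDerivWithinAt
  have himage : volume (f '' s) = 0 :=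
    measure_mono_null ((image_mono inter_subset_left).trans (image_preimage_subset f T))
      (by rwa [measure_toMeasurable])
  have hs0 := ae_eq_zero_of_hasDerivWithinAt_of_volume_image_eq_zero hs hf'
    (hmono.injOn_deriv_ne_zero.mono inter_subset_right) himage
  filter_upwards [(ae_restrict_iff' hs).1 hs0] with x hx hxB
  by_contra hne
  exact hne (hx ⟨subset_toMeasurable _ _ hxB, hne⟩)

/-- If `f : ℝ → ℝ` is increasing and Lipschitz, then for any measurable set `B`
of Lebesgue measure zero, `deriv f = 0` almost everywhere on `f ⁻¹' B`. -/
theorem deriv_zero_ae_on_preimage_null (f : ℝ → ℝ) (K : NNReal)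
    (hmono : Monotone f) (hlip : LipschitzWith K f)
    (B : Set ℝ) (hB : MeasurableSet B) (hB0 : volume B = 0) :
    ∀ᵐ ξ, ξ ∈ f ⁻¹' B → deriv f ξ = 0 :=
  deriv_zero_ae_on_preimage_null_general f hmono B hB0
end

section
/- Let μ be a finite positive Radon measure on ℝ, y(ξ) = sup{x : μ((-∞,x)) + x < ξ}, and H(ξ) = ξ - y(ξ). Then H is nondecreasing, H is Lipschitz with constant 1, lim_{ξ→-∞} H(ξ) = 0, and lim_{ξ→∞} H(ξ) = μ(ℝ). -/
open MeasureTheory Filter Set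

/-!
For any monotone `f : ℝ → ℝ`, the map `x ↦ f x + x` is strictly increasing with increments at
least those of `x`, so its generalized inverse `y` grows by at most `ξ' - ξ` between `ξ ≤ ξ'`; this
makes both `y` and `H = id - y` monotone and `1`-Lipschitz. Comparing the sublevel set
`{x | f x + x < ξ}` with a single point `x₀ = ξ - c` traps `H ξ` between `min c (f (ξ - c))` and
`max c (f (ξ - c))`, so `H` inherits the limits of `f` at `±∞`. For `f x = μ((-∞, x))` these are
`0` and `μ(ℝ)`.
-/

/-- The generalized inverse `y` of `x ↦ f x + x`. -/
noncomputable def addIdInv (f : ℝ → ℝ) (ξ : ℝ) : ℝ := sSup {x | f x + x < ξ}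

namespace Monotone

variable {f : ℝ → ℝ} (hf : Monotone f)
include hf

theorem nonempty_setOf_add_lt (ξ : ℝ) : {x | f x + x < ξ}.Nonempty := by
  refine ⟨min 0 (ξ - f 0 - 1), ?_⟩
  have := hf (min_le_left 0 (ξ - f 0 - 1))
  have := min_le_right 0 (ξ - f 0 - 1)
  show f _ + _ < ξ
  linarith

theorem bddAbove_setOf_add_lt (ξ : ℝ) : BddAbove {x | f x + x < ξ} := by
  refine ⟨max 0 (ξ - f 0), fun x (hx : f x + x < ξ) => ?_⟩
  rcases le_total x 0 with hx0 | hx0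
  · exact hx0.trans (le_max_left _ _)
  · have := hf hx0
    exact le_max_of_le_right (by linarith)

theorem monotone_addIdInv : Monotone (addIdInv f) := fun ξ ξ' hξ =>
  csSup_le_csSup (hf.bddAbove_setOf_add_lt ξ') (hf.nonempty_setOf_add_lt ξ)
    fun x (hx : f x + x < ξ) => show f x + x < ξ' by linarith

theorem addIdInv_le_add_sub {ξ ξ' : ℝ} (hξ : ξ ≤ ξ') :
    addIdInv f ξ' ≤ addIdInv f ξ + (ξ' - ξ) := by
  refine csSup_le (hf.nonempty_setOf_add_lt ξ') fun x (hx : f x + x < ξ') => ?_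
  have hshift : f (x - (ξ' - ξ)) + (x - (ξ' - ξ)) < ξ := by
    have := hf (show x - (ξ' - ξ) ≤ x by linarith)
    linarith
  have := le_csSup (hf.bddAbove_setOf_add_lt ξ) hshift
  unfold addIdInv
  linarith

theorem monotone_sub_addIdInv : Monotone fun ξ => ξ - addIdInv f ξ := fun ξ ξ' hξ => by
  have := hf.addIdInv_le_add_sub hξ
  dsimp only
  linarith

theorem lipschitzWith_sub_addIdInv : LipschitzWith 1 fun ξ => ξ - addIdInv f ξ := by
  refine LipschitzWith.of_le_add fun ξ ξ' => ?_
  rcases le_total ξ ξ' with hξ | hξ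
  · exact (hf.monotone_sub_addIdInv hξ).trans (le_add_of_nonneg_right dist_nonneg)
  · have := hf.monotone_addIdInv hξ
    rw [Real.dist_eq, abs_of_nonneg (sub_nonneg.2 hξ)]
    linarith

theorem min_le_sub_addIdInv (ξ c : ℝ) : min c (f (ξ - c)) ≤ ξ - addIdInv f ξ := by
  suffices addIdInv f ξ ≤ max (ξ - c) (ξ - f (ξ - c)) by
    rw [← sub_sub_cancel ξ (min c _), ← max_sub_sub_left]
    linarith
  refine csSup_le (hf.nonempty_setOf_add_lt ξ) fun x (hx : f x + x < ξ) => ?_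
  rcases le_total x (ξ - c) with hxc | hxc
  · exact le_max_of_le_left hxc
  · have := hf hxc
    exact le_max_of_le_right (by linarith)

theorem sub_addIdInv_le_max (ξ c : ℝ) : ξ - addIdInv f ξ ≤ max c (f (ξ - c)) := by
  suffices min (ξ - c) (ξ - f (ξ - c)) ≤ addIdInv f ξ by
    rw [← sub_sub_cancel ξ (max c _), ← min_sub_sub_left]
    linarith
  rcases lt_or_ge (f (ξ - c) + (ξ - c)) ξ with hlt | hge
  · exact min_le_of_left_le (le_csSup (hf.bddAbove_setOf_add_lt ξ) hlt)
  · refine min_le_of_right_le (le_of_forall_lt_imp_le_of_dense fun x hx => ?_)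
    have hmem : f x + x < ξ := by
      have := hf (show x ≤ ξ - c by linarith)
      linarith
    exact le_csSup (hf.bddAbove_setOf_add_lt ξ) hmem

theorem tendsto_sub_addIdInv {l : Filter ℝ} {L : ℝ}
    (hfL : Tendsto (fun ξ => f (ξ - L)) l (nhds L)) :
    Tendsto (fun ξ => ξ - addIdInv f ξ) l (nhds L) := by
  refine tendsto_order.2 ⟨fun a ha => ?_, fun a ha => ?_⟩
  · filter_upwards [hfL.eventually (lt_mem_nhds ha)] with ξ hξ
    exact (lt_min ha hξ).trans_le (hf.min_le_sub_addIdInv ξ L)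
  · filter_upwards [hfL.eventually (gt_mem_nhds ha)] with ξ hξ
    exact (hf.sub_addIdInv_le_max ξ L).trans_lt (max_lt ha hξ)

end Monotone

section FiniteMeasure

variable (μ : Measure ℝ) [IsFiniteMeasure μ]

theorem monotone_measure_Iio_toReal : Monotone fun x => (μ (Iio x)).toReal := fun _ _ h =>
  ENNReal.toReal_mono (measure_ne_top μ _) (measure_mono (Iio_subset_Iio h))

theorem tendsto_measure_Iio_toReal_atBot :
    Tendsto (fun x => (μ (Iio x)).toReal) atBot (nhds 0) := by
  have hμ := tendsto_measure_iInter_atBot (μ := μ) (fun x => measurableSet_Iio.nullMeasurableSet)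
    monotone_Iio ⟨0, measure_ne_top μ _⟩
  rw [show ⋂ x : ℝ, Iio x = ∅ from iInter_eq_empty_iff.2 fun x => ⟨x, lt_irrefl x⟩,
    measure_empty] at hμ
  simpa [Function.comp_def] using (ENNReal.tendsto_toReal ENNReal.zero_ne_top).comp hμ

theorem tendsto_measure_Iio_toReal_atTop :
    Tendsto (fun x => (μ (Iio x)).toReal) atTop (nhds (μ univ).toReal) := by
  have hμ := tendsto_measure_iUnion_atTop (μ := μ) (monotone_Iio (α := ℝ))
  rw [iUnion_Iio] at hμ
  exact (ENNReal.tendsto_toReal (measure_ne_top μ _)).comp hμ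

end FiniteMeasure

/-- With `y` the generalized inverse of `x ↦ μ((-∞,x)) + x` and `H = id - y`,
the function `H` is nondecreasing, Lipschitz with constant 1, tends to `0` at `-∞`
and to `μ(ℝ)` at `+∞`. -/
theorem energy_distribution_properties (μ : Measure ℝ) [IsFiniteMeasure μ]
    (y H : ℝ → ℝ)
    (hy : ∀ ξ, y ξ = sSup {x : ℝ | (μ (Set.Iio x)).toReal + x < ξ})
    (hH : ∀ ξ, H ξ = ξ - y ξ) :
    Monotone H ∧ LipschitzWith 1 H ∧
      Tendsto H atBot (nhds 0) ∧ Tendsto H atTop (nhds (μ Set.univ).toReal) := by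
  have hmono := monotone_measure_Iio_toReal μ
  obtain rfl : H = fun ξ => ξ - addIdInv (fun x => (μ (Iio x)).toReal) ξ := by
    funext ξ
    rw [hH, hy, addIdInv]
  refine ⟨hmono.monotone_sub_addIdInv, hmono.lipschitzWith_sub_addIdInv, ?_, ?_⟩
  · exact hmono.tendsto_sub_addIdInv <|
      (tendsto_measure_Iio_toReal_atBot μ).comp (tendsto_atBot_add_const_right _ _ tendsto_id)
  · exact hmono.tendsto_sub_addIdInv <|
      (tendsto_measure_Iio_toReal_atTop μ).comp (tendsto_atTop_add_const_right _ _ tendsto_id)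
end

section
/- Let a, b, c, d be real numbers with a ≥ 0, c ≥ 0, a·c = b² + d², and define for t ≥ 0: A(t) = (1/4)c t² + b t + a, B(t) = (1/2)c t + b, C(t) = c. Then A(t) ≥ 0 for all t ≥ 0, and A(t)·C(t) = B(t)² + d². -/
/-- Pointwise invariance: if `a, c ≥ 0` and `a·c = b² + d²`, then
`A(t) = (1/4)c t² + b t + a` stays nonnegative for `t ≥ 0` and
`A(t)·C(t) = B(t)² + d²` with `B(t) = (1/2)c t + b`, `C(t) = c`. -/
theorem pointwise_invariance (a b c d : ℝ) (ha : 0 ≤ a) (hc : 0 ≤ c)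
    (hrel : a * c = b ^ 2 + d ^ 2) :
    ∀ t : ℝ, 0 ≤ t →
      0 ≤ (1/4) * c * t ^ 2 + b * t + a ∧
      ((1/4) * c * t ^ 2 + b * t + a) * c = ((1/2) * c * t + b) ^ 2 + d ^ 2 := by
  intro t ht
  have hid : ((1/4) * c * t ^ 2 + b * t + a) * c = ((1/2) * c * t + b) ^ 2 + d ^ 2 := by
    linear_combination hrel
  refine ⟨?_, hid⟩
  rcases eq_or_lt_of_le hc with hc0 | hcpos
  · have hb : b = 0 := by nlinarith [sq_nonneg b, sq_nonneg d]
    simp [← hc0, hb, ha]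
  · nlinarith [sq_nonneg ((1/2) * c * t + b), sq_nonneg d]
end

section
/- Let a, b, c, d ∈ ℝ with a ≥ 0, c ≥ 0, a·c = b² + d², and a + c ≥ κ > 0. Define A(t) = (1/4)c t² + b t + a and C(t) = c. Then for all t ≥ 0, A(t) + C(t) ≥ κ e^{-t/2}. -/
/-!
Along the flow, `A(t) = c t²/4 + b t + a`, `B(t) = c t/2 + b` and `C(t) = c` keep satisfying
`A C = B² + d²`, so `|B| ≤ √(A C) ≤ (A + C)/2`. Since `(A + C)' = B`, this is the differential
inequality `(A + C)' ≥ -(A + C)/2`, and Grönwall's inequality gives the exponential lower bound.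
-/

open Real Set

theorem mul_exp_le_of_neg_mul_le_deriv_right {f f' : ℝ → ℝ} {k a b : ℝ}
    (hf : ContinuousOn f (Icc a b)) (hf' : ∀ x ∈ Ico a b, HasDerivWithinAt f (f' x) (Ici x) x)
    (bound : ∀ x ∈ Ico a b, -k * f x ≤ f' x) :
    ∀ x ∈ Icc a b, f a * exp (-k * (x - a)) ≤ f x := by
  intro x hx
  have h := le_gronwallBound_of_liminf_deriv_right_le (f := fun y => -f y) (f' := fun y => -f' y)
    (δ := -f a) (K := -k) (ε := 0) hf.neg
    (fun y hy _ hr => (hf' y hy).neg.liminf_right_slope_le hr) le_rfl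
    (fun y hy => by linarith [bound y hy]) x hx
  rw [gronwallBound_ε0] at h
  linarith

theorem abs_le_half_add_of_mul_eq_sq_add_sq {x y z w : ℝ} (hx : 0 ≤ x) (hy : 0 ≤ y)
    (h : x * y = z ^ 2 + w ^ 2) : |z| ≤ (x + y) / 2 :=
  abs_le_of_sq_le_sq (by nlinarith [sq_nonneg (x - y), sq_nonneg w]) (by linarith)

section LagrangianFlow

variable {a b c d : ℝ}

theorem lagrangian_mul_eq_sq_add_sq (hrel : a * c = b ^ 2 + d ^ 2) (t : ℝ) :
    ((1/4) * c * t ^ 2 + b * t + a) * c = ((1/2) * c * t + b) ^ 2 + d ^ 2 := by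
  linear_combination hrel

theorem lagrangian_nonneg (ha : 0 ≤ a) (hc : 0 ≤ c) (hrel : a * c = b ^ 2 + d ^ 2) (t : ℝ) :
    0 ≤ (1/4) * c * t ^ 2 + b * t + a := by
  rcases hc.eq_or_lt with rfl | hc
  · have hb : b = 0 := by nlinarith [sq_nonneg b, sq_nonneg d]
    simpa [hb] using ha
  · have := lagrangian_mul_eq_sq_add_sq hrel t
    nlinarith [sq_nonneg ((1/2) * c * t + b), sq_nonneg d]

theorem hasDerivAt_lagrangian_add (t : ℝ) :
    HasDerivAt (fun s => (1/4) * c * s ^ 2 + b * s + a + c) ((1/2) * c * t + b) t := by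
  have := ((((hasDerivAt_pow 2 t).const_mul ((1/4) * c)).add
    ((hasDerivAt_id' t).const_mul b)).add_const a).add_const c
  exact this.congr_deriv (by norm_num; ring)

theorem neg_half_mul_le_lagrangian_deriv (ha : 0 ≤ a) (hc : 0 ≤ c)
    (hrel : a * c = b ^ 2 + d ^ 2) (t : ℝ) :
    -(1/2) * ((1/4) * c * t ^ 2 + b * t + a + c) ≤ (1/2) * c * t + b := by
  have := abs_le_half_add_of_mul_eq_sq_add_sq (lagrangian_nonneg ha hc hrel t) hc
    (lagrangian_mul_eq_sq_add_sq hrel t)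
  linarith [neg_abs_le ((1/2) * c * t + b)]

end LagrangianFlow

theorem pointwise_gronwall_lower_bound_general (a b c d κ : ℝ)
    (ha : 0 ≤ a) (hc : 0 ≤ c) (hrel : a * c = b ^ 2 + d ^ 2)
    (hκ' : κ ≤ a + c) :
    ∀ t : ℝ, 0 ≤ t →
      κ * Real.exp (-t / 2) ≤ ((1/4) * c * t ^ 2 + b * t + a) + c := by
  intro t ht
  have hderiv := fun s => hasDerivAt_lagrangian_add (a := a) (b := b) (c := c) s
  have h := mul_exp_le_of_neg_mul_le_deriv_right (k := 1/2) (a := 0) (b := t)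
    (fun s _ => (hderiv s).continuousAt.continuousWithinAt)
    (fun s _ => (hderiv s).hasDerivWithinAt)
    (fun s _ => neg_half_mul_le_lagrangian_deriv ha hc hrel s) t ⟨ht, le_rfl⟩
  calc κ * exp (-t / 2) ≤ (a + c) * exp (-(1/2) * (t - 0)) := by
        rw [show -(1/2) * (t - 0) = -t / 2 by ring]; gcongr
    _ ≤ _ := by simpa using h

/-- Pointwise Grönwall-type lower bound: if `a, c ≥ 0`, `a·c = b² + d²` and
`a + c ≥ κ > 0`, then `A(t) + C(t) ≥ κ e^{-t/2}` for all `t ≥ 0`. -/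
theorem pointwise_gronwall_lower_bound (a b c d κ : ℝ)
    (ha : 0 ≤ a) (hc : 0 ≤ c) (hrel : a * c = b ^ 2 + d ^ 2)
    (hκ : 0 < κ) (hκ' : κ ≤ a + c) :
    ∀ t : ℝ, 0 ≤ t →
      κ * Real.exp (-t / 2) ≤ ((1/4) * c * t ^ 2 + b * t + a) + c :=
  pointwise_gronwall_lower_bound_general a b c d κ ha hc hrel hκ'
end

section
/- Let G be the set of homeomorphisms f: ℝ → ℝ such that f - id ∈ W^{1,∞}(ℝ), f⁻¹ - id ∈ W^{1,∞}(ℝ), and f' - 1 ∈ L²(ℝ). Then G is a group under composition. -/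
open MeasureTheory

/-!
The `W^{1,∞}` conditions are symmetric in `f` and `f⁻¹`, and stable under composition since
`ψ ∘ φ - id = (ψ - id) ∘ φ + (φ - id)`. For the `L²` condition, almost everywhere
`(g ∘ f)' - 1 = (g' ∘ f - 1) f' + (f' - 1)` and `(f⁻¹)' - 1 = -(f' ∘ f⁻¹ - 1) (f⁻¹)'`.
Here `f'` and `(f⁻¹)'` are bounded, and since `f⁻¹` is Lipschitz, precomposition with `f`
preserves null sets (so the chain rule holds a.e.) and preserves `L²`.
-/

/-- The relabeling set: homeomorphisms `f` of `ℝ` with `f - id` and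
`f⁻¹ - id` in `W^{1,∞}(ℝ)` (bounded and Lipschitz) and `f' - 1 ∈ L²(ℝ)`. -/
def RelabelGroup : Set (ℝ ≃ₜ ℝ) :=
  {f | (∃ C, LipschitzWith C (fun x => f x - x)) ∧
       BddAbove (Set.range fun x => |f x - x|) ∧
       (∃ C, LipschitzWith C (fun x => f.symm x - x)) ∧
       BddAbove (Set.range fun x => |f.symm x - x|) ∧
       MemLp (fun x => deriv (⇑f) x - 1) 2 volume}

/-- For `E = ℝ` this says `φ - id ∈ W^{1,∞}(ℝ)`. -/
def IsBddLipschitzPerturbation {E : Type*} [SeminormedAddCommGroup E] (φ : E → E) : Prop :=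
  (∃ C, LipschitzWith C fun x => φ x - x) ∧ BddAbove (Set.range fun x => ‖φ x - x‖)

namespace IsBddLipschitzPerturbation

variable {E : Type*} [SeminormedAddCommGroup E] {φ ψ : E → E}

theorem id : IsBddLipschitzPerturbation (id : E → E) :=
  ⟨⟨0, by simpa using LipschitzWith.const (0 : E)⟩, ⟨0, by simp [upperBounds]⟩⟩

theorem lipschitzWith (hφ : IsBddLipschitzPerturbation φ) : ∃ C, LipschitzWith C φ := by
  obtain ⟨⟨C, hC⟩, -⟩ := hφ
  exact ⟨C + 1, by simpa using hC.add LipschitzWith.id⟩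

theorem comp (hψ : IsBddLipschitzPerturbation ψ) (hφ : IsBddLipschitzPerturbation φ) :
    IsBddLipschitzPerturbation (ψ ∘ φ) := by
  obtain ⟨L, hL⟩ := hφ.lipschitzWith
  obtain ⟨⟨Cψ, hCψ⟩, Bψ, hBψ⟩ := hψ
  obtain ⟨⟨Cφ, hCφ⟩, Bφ, hBφ⟩ := hφ
  have hsplit (x : E) : (ψ ∘ φ) x - x = (ψ (φ x) - φ x) + (φ x - x) :=
    (sub_add_sub_cancel _ _ _).symm
  refine ⟨⟨_, funext hsplit ▸ (hCψ.comp hL).add hCφ⟩, Bψ + Bφ, ?_⟩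
  rintro _ ⟨x, rfl⟩
  dsimp only
  rw [hsplit]
  exact (norm_add_le _ _).trans
    (add_le_add (hBψ (Set.mem_range_self (φ x))) (hBφ (Set.mem_range_self x)))

end IsBddLipschitzPerturbation

theorem LipschitzWith.volume_image_le {f : ℝ → ℝ} {C : NNReal} (hf : LipschitzWith C f)
    (s : Set ℝ) : volume (f '' s) ≤ C * volume s := by
  simpa [hausdorffMeasure_real] using hf.hausdorffMeasure_image_le zero_le_one s

namespace Homeomorph

variable {f : ℝ ≃ₜ ℝ} {C : NNReal}

theorem map_volume_le_smul_of_lipschitzWith_symm (hf : LipschitzWith C f.symm) :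
    Measure.map f volume ≤ (C : ENNReal) • volume := by
  refine Measure.le_iff.2 fun s hs => ?_
  rw [Measure.map_apply f.measurable hs, ← f.image_symm]
  exact hf.volume_image_le s

theorem quasiMeasurePreserving_of_lipschitzWith_symm (hf : LipschitzWith C f.symm) :
    Measure.QuasiMeasurePreserving f volume volume :=
  ⟨f.measurable,
    Measure.absolutelyContinuous_of_le_smul (map_volume_le_smul_of_lipschitzWith_symm hf)⟩

theorem memLp_comp_of_lipschitzWith_symm {F : Type*} [NormedAddCommGroup F] {p : ENNReal}
    (hf : LipschitzWith C f.symm) {u : ℝ → F} (hu : MemLp u p volume) :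
    MemLp (u ∘ f) p volume :=
  ((hu.smul_measure ENNReal.coe_ne_top).mono_measure
    (map_volume_le_smul_of_lipschitzWith_symm hf)).comp_of_map f.measurable.aemeasurable

end Homeomorph

theorem LipschitzWith.memLp_top_deriv {f : ℝ → ℝ} {C : NNReal} {μ : Measure ℝ}
    (hf : LipschitzWith C f) : MemLp (deriv f) ⊤ μ :=
  memLp_top_of_bound (stronglyMeasurable_deriv f).aestronglyMeasurable C
    (ae_of_all _ fun _ => norm_deriv_le_of_lipschitz hf)

section Derivatives

variable {f : ℝ ≃ₜ ℝ} {Cf Cs : NNReal}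

theorem ae_deriv_comp_homeomorph (hf : LipschitzWith Cf f) (hfs : LipschitzWith Cs f.symm)
    {g : ℝ → ℝ} {Cg : NNReal} (hg : LipschitzWith Cg g) :
    ∀ᵐ x, deriv (g ∘ f) x = deriv g (f x) * deriv f x := by
  filter_upwards [hf.ae_differentiableAt,
    (f.quasiMeasurePreserving_of_lipschitzWith_symm hfs).ae hg.ae_differentiableAt]
    with x hfx hgx
  exact deriv_comp x hgx hfx

theorem ae_deriv_comp_symm_mul_deriv_symm (hf : LipschitzWith Cf f)
    (hfs : LipschitzWith Cs f.symm) :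
    ∀ᵐ y, deriv f (f.symm y) * deriv f.symm y = 1 := by
  filter_upwards [ae_deriv_comp_homeomorph (f := f.symm) hfs (by simpa using hf) hf] with y hy
  rw [← hy, f.self_comp_symm, deriv_id]

variable {p : ENNReal}

theorem memLp_deriv_trans_sub_one {g : ℝ ≃ₜ ℝ} {Cg : NNReal} (hf : LipschitzWith Cf f)
    (hfs : LipschitzWith Cs f.symm) (hg : LipschitzWith Cg g)
    (hf' : MemLp (fun x => deriv f x - 1) p volume)
    (hg' : MemLp (fun x => deriv g x - 1) p volume) :
    MemLp (fun x => deriv (f.trans g) x - 1) p volume := by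
  have hprod : MemLp (fun x => (deriv g (f x) - 1) * deriv f x) p volume :=
    hf.memLp_top_deriv.mul' (f.memLp_comp_of_lipschitzWith_symm hfs hg')
  refine (hprod.add hf').ae_eq ?_
  filter_upwards [ae_deriv_comp_homeomorph hf hfs hg] with x hx
  rw [Pi.add_apply, show ⇑(f.trans g) = g ∘ f from rfl, hx]
  ring

theorem memLp_deriv_symm_sub_one (hf : LipschitzWith Cf f) (hfs : LipschitzWith Cs f.symm)
    (hf' : MemLp (fun x => deriv f x - 1) p volume) :
    MemLp (fun x => deriv f.symm x - 1) p volume := by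
  have hprod : MemLp (fun y => (deriv f (f.symm y) - 1) * deriv f.symm y) p volume :=
    hfs.memLp_top_deriv.mul'
      (f.symm.memLp_comp_of_lipschitzWith_symm (by simpa using hf) hf')
  refine hprod.neg.ae_eq ?_
  filter_upwards [ae_deriv_comp_symm_mul_deriv_symm hf hfs] with y hy
  simp only [Pi.neg_apply]
  linear_combination -hy

end Derivatives

theorem mem_relabelGroup_iff {f : ℝ ≃ₜ ℝ} :
    f ∈ RelabelGroup ↔ IsBddLipschitzPerturbation f ∧ IsBddLipschitzPerturbation f.symm ∧
      MemLp (fun x => deriv f x - 1) 2 volume := by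
  simp only [RelabelGroup, IsBddLipschitzPerturbation, Real.norm_eq_abs, Set.mem_ofPred_eq,
    and_assoc]

theorem refl_mem_relabelGroup : Homeomorph.refl ℝ ∈ RelabelGroup :=
  mem_relabelGroup_iff.2 ⟨.id, .id, by simp [MemLp.zero']⟩

theorem trans_mem_relabelGroup {f g : ℝ ≃ₜ ℝ} (hf : f ∈ RelabelGroup) (hg : g ∈ RelabelGroup) :
    f.trans g ∈ RelabelGroup := by
  obtain ⟨hfP, hfsP, hf'⟩ := mem_relabelGroup_iff.1 hf
  obtain ⟨hgP, hgsP, hg'⟩ := mem_relabelGroup_iff.1 hg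
  obtain ⟨_, hLf⟩ := hfP.lipschitzWith
  obtain ⟨_, hLfs⟩ := hfsP.lipschitzWith
  obtain ⟨_, hLg⟩ := hgP.lipschitzWith
  exact mem_relabelGroup_iff.2
    ⟨hgP.comp hfP, hfsP.comp hgsP, memLp_deriv_trans_sub_one hLf hLfs hLg hf' hg'⟩

theorem symm_mem_relabelGroup {f : ℝ ≃ₜ ℝ} (hf : f ∈ RelabelGroup) : f.symm ∈ RelabelGroup := by
  obtain ⟨hfP, hfsP, hf'⟩ := mem_relabelGroup_iff.1 hf
  obtain ⟨_, hLf⟩ := hfP.lipschitzWith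
  obtain ⟨_, hLfs⟩ := hfsP.lipschitzWith
  exact mem_relabelGroup_iff.2 ⟨hfsP, by simpa using hfP, memLp_deriv_symm_sub_one hLf hLfs hf'⟩

/-- `G` is a group under composition: it contains the identity, and is closed
under composition and inversion. -/
theorem relabelGroup_is_group :
    (Homeomorph.refl ℝ) ∈ RelabelGroup ∧
    (∀ f g, f ∈ RelabelGroup → g ∈ RelabelGroup → f.trans g ∈ RelabelGroup) ∧
    (∀ f, f ∈ RelabelGroup → f.symm ∈ RelabelGroup) :=
  ⟨refl_mem_relabelGroup, fun _ _ => trans_mem_relabelGroup, fun _ => symm_mem_relabelGroup⟩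
end

section
/- Let h, h̄ ∈ L²(ℝ) and let f ∈ G be an increasing bi-Lipschitz homeomorphism of ℝ with ‖f'‖_∞ ≤ C² (C ≥ 1). Then inf_{g∈G} ‖(h∘f)·f' - (h̄∘g)·g'‖_{L²} ≤ C · inf_{f̄∈G} ‖h - (h̄∘f̄)·f̄'‖_{L²}. -/
open MeasureTheory ENNReal

/-!
Given `f̄ ∈ G`, test the left infimum with `g = f̄ ∘ f ∈ G`. Since `f` is bi-Lipschitz, the chain
rule holds almost everywhere and turns the integrand into `u (f ξ) * f' ξ` with
`u = h - (h̄ ∘ f̄) * f̄'`. Substituting `η = f ξ` (valid for any injective a.e. differentiable `f`)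
and using `|f'| ≤ C²` gives `∫ u(f ξ)² f'(ξ)² dξ ≤ C² ∫ u(η)² dη`.
-/

open NNReal Set Function

lemma LipschitzWith.volume_image_eq_zero {K : ℝ≥0} {f : ℝ → ℝ} (hf : LipschitzWith K f)
    {s : Set ℝ} (hs : volume s = 0) : volume (f '' s) = 0 := by
  simpa [hausdorffMeasure_real, hs] using hf.hausdorffMeasure_image_le zero_le_one s

lemma Homeomorph.quasiMeasurePreserving_of_lipschitzWith_symm_s13 (f : ℝ ≃ₜ ℝ) {K : ℝ≥0}
    (hK : LipschitzWith K f.symm) : Measure.QuasiMeasurePreserving f volume volume :=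
  ⟨f.continuous.measurable, .mk fun s hs hs0 => by
    rw [Measure.map_apply f.continuous.measurable hs, ← f.image_symm]
    exact hK.volume_image_eq_zero hs0⟩

lemma ae_deriv_comp {f g : ℝ → ℝ} (hf : Measure.QuasiMeasurePreserving f volume volume)
    (hfd : ∀ᵐ x, DifferentiableAt ℝ f x) (hgd : ∀ᵐ y, DifferentiableAt ℝ g y) :
    ∀ᵐ x, deriv (g ∘ f) x = deriv g (f x) * deriv f x := by
  filter_upwards [hfd, hf.ae hgd] with x hfx hgx
  exact deriv_comp x hgx hfx

lemma lintegral_abs_deriv_mul_comp_le {f : ℝ → ℝ} (hd : ∀ᵐ x, DifferentiableAt ℝ f x)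
    (hinj : Injective f) (F : ℝ → ℝ≥0∞) :
    ∫⁻ x, ENNReal.ofReal |deriv f x| * F (f x) ≤ ∫⁻ y, F y := by
  set s := {x | DifferentiableAt ℝ f x}
  have hs : volume.restrict s = volume := Measure.restrict_eq_self_of_ae_mem hd
  calc ∫⁻ x, ENNReal.ofReal |deriv f x| * F (f x)
      = ∫⁻ x in s, ENNReal.ofReal |deriv f x| * F (f x) := by rw [hs]
    _ = ∫⁻ y in f '' s, F y :=
      (lintegral_image_eq_lintegral_abs_deriv_mul (measurableSet_of_differentiableAt ℝ f)
        (fun x hx => hx.hasDerivAt.hasDerivWithinAt) hinj.injOn F).symm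
    _ ≤ ∫⁻ y, F y := setLIntegral_le_lintegral _ _

lemma sq_eLpNorm_two {α : Type*} [MeasurableSpace α] (μ : Measure α) (g : α → ℝ) :
    eLpNorm g 2 μ ^ 2 = ∫⁻ x, ‖g x‖ₑ ^ 2 ∂μ := by
  simpa using eLpNorm_nnreal_pow_eq_lintegral (f := g) (μ := μ) (p := 2) two_ne_zero

lemma eLpNorm_comp_mul_deriv_le {f : ℝ → ℝ} (hd : ∀ᵐ x, DifferentiableAt ℝ f x)
    (hinj : Injective f) {C : ℝ} (hC : 0 ≤ C) (hderiv : ∀ᵐ x, |deriv f x| ≤ C ^ 2)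
    (u : ℝ → ℝ) :
    eLpNorm (fun x => u (f x) * deriv f x) 2 volume ≤ ENNReal.ofReal C * eLpNorm u 2 volume := by
  rw [← ENNReal.pow_le_pow_left_iff two_ne_zero, mul_pow, sq_eLpNorm_two, sq_eLpNorm_two,
    ← ENNReal.ofReal_pow hC]
  calc ∫⁻ x, ‖u (f x) * deriv f x‖ₑ ^ 2
      ≤ ∫⁻ x, ENNReal.ofReal (C ^ 2) * (ENNReal.ofReal |deriv f x| * ‖u (f x)‖ₑ ^ 2) := by
        refine lintegral_mono_ae ?_
        filter_upwards [hderiv] with x hx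
        rw [enorm_mul, Real.enorm_eq_ofReal_abs (deriv f x)]
        calc (‖u (f x)‖ₑ * ENNReal.ofReal |deriv f x|) ^ 2
            = ENNReal.ofReal |deriv f x| * (ENNReal.ofReal |deriv f x| * ‖u (f x)‖ₑ ^ 2) := by
              ring
          _ ≤ _ := by gcongr
    _ = ENNReal.ofReal (C ^ 2) * ∫⁻ x, ENNReal.ofReal |deriv f x| * ‖u (f x)‖ₑ ^ 2 :=
        lintegral_const_mul' _ _ ofReal_ne_top
    _ ≤ ENNReal.ofReal (C ^ 2) * ∫⁻ y, ‖u y‖ₑ ^ 2 :=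
        mul_le_mul_right (lintegral_abs_deriv_mul_comp_le hd hinj fun y => ‖u y‖ₑ ^ 2) _

lemma MeasureTheory.MemLp.comp_mul_deriv {u f : ℝ → ℝ} (hu : MemLp u 2 volume)
    (hf : Measure.QuasiMeasurePreserving f volume volume) (hd : ∀ᵐ x, DifferentiableAt ℝ f x)
    (hinj : Injective f) {C : ℝ} (hC : 0 ≤ C) (hderiv : ∀ᵐ x, |deriv f x| ≤ C ^ 2) :
    MemLp (fun x => u (f x) * deriv f x) 2 volume :=
  ⟨(hu.1.comp_quasiMeasurePreserving hf).mul (measurable_deriv f).aestronglyMeasurable,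
    (eLpNorm_comp_mul_deriv_le hd hinj hC hderiv u).trans_lt (mul_lt_top ofReal_lt_top hu.2)⟩

lemma lipschitzWith_of_lipschitzWith_sub_id {f : ℝ → ℝ} {K : ℝ≥0}
    (h : LipschitzWith K fun x => f x - x) : LipschitzWith (K + 1) f := by
  simpa using h.add LipschitzWith.id

lemma exists_lipschitzWith_comp_sub_id {f g : ℝ → ℝ} (hf : ∃ K, LipschitzWith K fun x => f x - x)
    (hg : ∃ K, LipschitzWith K fun x => g x - x) : ∃ K, LipschitzWith K fun x => g (f x) - x := by
  obtain ⟨K, hK⟩ := hf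
  obtain ⟨L, hL⟩ := hg
  exact ⟨_, by simpa using (hL.comp (lipschitzWith_of_lipschitzWith_sub_id hK)).add hK⟩

lemma bddAbove_range_abs_comp_sub_id {f g : ℝ → ℝ} (hf : BddAbove (range fun x => |f x - x|))
    (hg : BddAbove (range fun x => |g x - x|)) : BddAbove (range fun x => |g (f x) - x|) := by
  obtain ⟨M, hM⟩ := hf
  obtain ⟨N, hN⟩ := hg
  refine ⟨N + M, forall_mem_range.2 fun x => ?_⟩
  calc |g (f x) - x| ≤ |g (f x) - f x| + |f x - x| := abs_sub_le _ _ _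
    _ ≤ N + M := add_le_add (hN (mem_range_self _)) (hM (mem_range_self _))

lemma memLp_deriv_comp_sub_one {f g : ℝ → ℝ} {K L : ℝ≥0} (hf : LipschitzWith K f)
    (hinj : Injective f) (hqmp : Measure.QuasiMeasurePreserving f volume volume)
    (hg : LipschitzWith L g) (hf' : MemLp (fun x => deriv f x - 1) 2 volume)
    (hg' : MemLp (fun y => deriv g y - 1) 2 volume) :
    MemLp (fun x => deriv (g ∘ f) x - 1) 2 volume := by
  have hfd : ∀ᵐ x, DifferentiableAt ℝ f x := hf.ae_differentiableAt
  have hbound : ∀ᵐ x, |deriv f x| ≤ √K ^ 2 := ae_of_all _ fun x => by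
    simpa using norm_deriv_le_of_lipschitz hf
  -- `(g ∘ f)' - 1 = (g' ∘ f - 1) f' + (f' - 1)` almost everywhere
  refine ((hg'.comp_mul_deriv hqmp hfd hinj (Real.sqrt_nonneg _) hbound).add hf').ae_eq ?_
  filter_upwards [ae_deriv_comp hqmp hfd hg.ae_differentiableAt] with x hx
  rw [Pi.add_apply, hx]
  ring

namespace RelabelGroup

lemma exists_lipschitzWith {f : ℝ ≃ₜ ℝ} (hf : f ∈ RelabelGroup) : ∃ K, LipschitzWith K f :=
  let ⟨_, hK⟩ := hf.1
  ⟨_, lipschitzWith_of_lipschitzWith_sub_id hK⟩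

lemma quasiMeasurePreserving {f : ℝ ≃ₜ ℝ} (hf : f ∈ RelabelGroup) :
    Measure.QuasiMeasurePreserving f volume volume :=
  let ⟨_, hK⟩ := hf.2.2.1
  f.quasiMeasurePreserving_of_lipschitzWith_symm_s13 (lipschitzWith_of_lipschitzWith_sub_id hK)

lemma ae_differentiableAt {f : ℝ ≃ₜ ℝ} (hf : f ∈ RelabelGroup) :
    ∀ᵐ x, DifferentiableAt ℝ f x :=
  let ⟨_, hK⟩ := exists_lipschitzWith hf
  hK.ae_differentiableAt

lemma trans_mem {f g : ℝ ≃ₜ ℝ} (hf : f ∈ RelabelGroup) (hg : g ∈ RelabelGroup) :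
    f.trans g ∈ RelabelGroup := by
  refine ⟨exists_lipschitzWith_comp_sub_id (f := f) (g := g) hf.1 hg.1,
    bddAbove_range_abs_comp_sub_id (f := f) (g := g) hf.2.1 hg.2.1,
    exists_lipschitzWith_comp_sub_id (f := g.symm) (g := f.symm) hg.2.2.1 hf.2.2.1,
    bddAbove_range_abs_comp_sub_id (f := g.symm) (g := f.symm) hg.2.2.2.1 hf.2.2.2.1, ?_⟩
  obtain ⟨K, hK⟩ := exists_lipschitzWith hf
  obtain ⟨L, hL⟩ := exists_lipschitzWith hg
  show MemLp (fun x => deriv (g ∘ f) x - 1) 2 volume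
  exact memLp_deriv_comp_sub_one hK f.injective (quasiMeasurePreserving hf) hL hf.2.2.2.2
    hg.2.2.2.2

end RelabelGroup

theorem relabel_L2_infimum_estimate_general (h hb : ℝ → ℝ)
    (f : ℝ ≃ₜ ℝ) (hf : f ∈ RelabelGroup)
    (C : ℝ) (hC : 1 ≤ C)
    (hderiv : ∀ᵐ ξ, |deriv (⇑f) ξ| ≤ C ^ 2) :
    ⨅ g ∈ RelabelGroup,
        eLpNorm (fun ξ => h (f ξ) * deriv (⇑f) ξ - hb (g ξ) * deriv (⇑g) ξ) 2 volume
      ≤ ENNReal.ofReal C *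
        ⨅ fb ∈ RelabelGroup,
          eLpNorm (fun ξ => h ξ - hb (fb ξ) * deriv (⇑fb) ξ) 2 volume := by
  have hC₀ : ENNReal.ofReal C ≠ 0 := (ENNReal.ofReal_pos.2 (by linarith)).ne'
  simp only [ENNReal.mul_iInf_of_ne hC₀ ofReal_ne_top]
  refine le_iInf₂ fun fb hfb => ?_
  calc _ ≤ eLpNorm (fun ξ => h (f ξ) * deriv f ξ - hb (f.trans fb ξ) * deriv (f.trans fb) ξ)
        2 volume := iInf₂_le _ (RelabelGroup.trans_mem hf hfb)
    _ = eLpNorm (fun ξ => (h (f ξ) - hb (fb (f ξ)) * deriv fb (f ξ)) * deriv f ξ) 2 volume := by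
        refine eLpNorm_congr_ae ?_
        filter_upwards [ae_deriv_comp (RelabelGroup.quasiMeasurePreserving hf)
          (RelabelGroup.ae_differentiableAt hf) (RelabelGroup.ae_differentiableAt hfb)] with ξ hξ
        change _ - _ * deriv (fb ∘ f) ξ = _
        rw [hξ, Homeomorph.trans_apply]
        ring
    _ ≤ _ := eLpNorm_comp_mul_deriv_le (RelabelGroup.ae_differentiableAt hf) f.injective
        (by linarith) hderiv (fun y => h y - hb (fb y) * deriv fb y)

/-- Relabeling estimate for the `L²`-part of the functional `J`:
if `f ∈ G` with `‖f'‖_∞ ≤ C²`, `C ≥ 1`, then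
`inf_{g∈G} ‖(h∘f)·f' - (h̄∘g)·g'‖₂ ≤ C · inf_{f̄∈G} ‖h - (h̄∘f̄)·f̄'‖₂`. -/
theorem relabel_L2_infimum_estimate (h hb : ℝ → ℝ)
    (hh : MemLp h 2 volume) (hhb : MemLp hb 2 volume)
    (f : ℝ ≃ₜ ℝ) (hf : f ∈ RelabelGroup) (hfmono : StrictMono f)
    (C : ℝ) (hC : 1 ≤ C)
    (hderiv : ∀ᵐ ξ, |deriv (⇑f) ξ| ≤ C ^ 2) :
    ⨅ g ∈ RelabelGroup,
        eLpNorm (fun ξ => h (f ξ) * deriv (⇑f) ξ - hb (g ξ) * deriv (⇑g) ξ) 2 volume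
      ≤ ENNReal.ofReal C *
        ⨅ fb ∈ RelabelGroup,
          eLpNorm (fun ξ => h ξ - hb (fb ξ) * deriv (⇑fb) ξ) 2 volume :=
  relabel_L2_infimum_estimate_general h hb f hf C hC hderiv
end
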